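/- For λ ∈ Γ_k with H_k = 1, one has σ_{k−1}(λ) ≥ C(n, k−1); that is, H_{k−1} ≥ H_k^{(k−1)/k} = 1. -/

import Mathlib

open Matrix Finset Real MeasureTheory

/-- Partial derivative of `f` in the `i`-th coordinate direction at `x`. -/
noncomputable def pd {n : ℕ} (f : (Fin n → ℝ) → ℝ) (i : Fin n) (x : Fin n → ℝ) : ℝ :=
  fderiv ℝ f x (Pi.single i 1)

/-- Squared Euclidean norm of the gradient `|Du|²`. -/
noncomputable def gradSq {n : ℕ} (u : (Fin n → ℝ) → ℝ) (x : Fin n → ℝ) : ℝ :=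
  ∑ i, (pd u i x) ^ 2

/-- The shape operator `h_i^j = ∂/∂x_i (u_j / √(1 - |Du|²))` of the spacelike graph of `u`. -/
noncomputable def Aop {n : ℕ} (u : (Fin n → ℝ) → ℝ) (x : Fin n → ℝ) :
    Matrix (Fin n) (Fin n) ℝ :=
  Matrix.of fun i j => pd (fun y => pd u j y / Real.sqrt (1 - gradSq u y)) i x

/-- `σ_k(A)`: the `k`-th elementary symmetric function of the eigenvalues of `A`,
read off from the characteristic polynomial. -/
noncomputable def msigma (n k : ℕ) (A : Matrix (Fin n) (Fin n) ℝ) : ℝ :=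
  if k ≤ n then (-1 : ℝ) ^ k * (Matrix.charpoly A).coeff (n - k) else 0

/-- The Newton tensor `(σ_k(A))^i_j = ∂σ_k(A)/∂A^j_i`. -/
noncomputable def newton (n k : ℕ) (A : Matrix (Fin n) (Fin n) ℝ) :
    Matrix (Fin n) (Fin n) ℝ :=
  Matrix.of fun i j =>
    deriv (fun t : ℝ => msigma n k (A + t • Matrix.single j i 1)) 0

/-- `σ_k(λ)` for `λ ∈ ℝⁿ`. -/
noncomputable def esymm (n k : ℕ) (lam : Fin n → ℝ) : ℝ :=
  ∑ s ∈ Finset.powersetCard k Finset.univ, ∏ i ∈ s, lam i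

/-- The Gårding cone `Γ_k`. -/
def GammaK (n k : ℕ) : Set (Fin n → ℝ) :=
  {lam | ∀ i, 1 ≤ i → i ≤ k → 0 < esymm n i lam}

/-- The Minkowski scalar product on `ℝ^{n,1}`. -/
noncomputable def mink (n : ℕ) (Y Z : Fin (n + 1) → ℝ) : ℝ :=
  (∑ i : Fin n, Y i.castSucc * Z i.castSucc) - Y (Fin.last n) * Z (Fin.last n)

/-- The graph map `X(x) = (x, u(x))`. -/
noncomputable def Xg {n : ℕ} (u : (Fin n → ℝ) → ℝ) (z : Fin n → ℝ) : Fin (n + 1) → ℝ :=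
  Fin.snoc z (u z)

/-- The timelike unit normal `N = (Du, 1)/√(1 - |Du|²)` of the graph of `u`. -/
noncomputable def Nvec {n : ℕ} (u : (Fin n → ℝ) → ℝ) (x : Fin n → ℝ) : Fin (n + 1) → ℝ :=
  fun j => (Fin.snoc (fun i => pd u i x) 1 : Fin (n + 1) → ℝ) j / Real.sqrt (1 - gradSq u x)

/-!
Newton's inequalities `H_j H_{j+2} ≤ H_{j+1}²` hold for every finite family of reals. Differentiating
`∏ (X - λᵢ)` keeps all roots real (Rolle) and preserves `H_0, …, H_{m-1}`, which reduces them to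
`m = j + 2` numbers. There, unless some `λᵢ = 0` (when `H_{j+2} = 0`), passing to the reciprocals
turns `H_i` into `H_{m-i} / H_m`, and the case `j = 0`, reduced by differentiation to two numbers, is
AM-GM. In `Γ_k` the means `H_0 = 1, H_1, …, H_k` are positive, so log-concavity gives Maclaurin's
`H_k^{k-1} ≤ H_{k-1}^k`, and `H_k = 1` forces `H_{k-1} ≥ 1`.
-/

namespace Multiset

/-- The paper's `H_k = σ_k / C(m, k)` for an `m`-element multiset; it is `0` when `k > m`. -/
noncomputable def esymmMean (s : Multiset ℝ) (k : ℕ) : ℝ :=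
  s.esymm k / (card s).choose k

open Polynomial

theorem card_roots_derivative_prod_X_sub_C (s : Multiset ℝ) :
    card (derivative (s.map fun a => X - C a).prod).roots = card s - 1 := by
  have hdeg := natDegree_multiset_prod_X_sub_C_eq_card s
  have hroots := congrArg card (roots_multiset_prod_X_sub_C s)
  have := card_roots_le_derivative (s.map fun a => X - C a).prod
  have := card_roots' (derivative (s.map fun a => X - C a).prod)
  rw [natDegree_derivative] at this
  omega

theorem card_mul_esymm_roots_derivative_prod_X_sub_C (s : Multiset ℝ) {i : ℕ}
    (hi : i < card s) :
    card s * (derivative (s.map fun a => X - C a).prod).roots.esymm i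
      = (card s - i) * s.esymm i := by
  set P := (s.map fun a => X - C a).prod
  have hdeg : P.natDegree = card s := natDegree_multiset_prod_X_sub_C_eq_card s
  have hlead : P.leadingCoeff = 1 :=
    monic_multiset_prod_of_monic _ _ fun a _ => monic_X_sub_C a
  have hsplit : card (derivative P).roots = (derivative P).natDegree := by
    rw [card_roots_derivative_prod_X_sub_C, natDegree_derivative, hdeg]
  have vieta := coeff_eq_esymm_roots_of_card hsplit
    (k := card s - 1 - i) (by rw [natDegree_derivative, hdeg]; omega)
  rw [coeff_derivative, prod_X_sub_C_coeff s (by omega), leadingCoeff_derivative, hlead,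
    natDegree_derivative, hdeg, show card s - (card s - 1 - i + 1) = i by omega,
    show card s - 1 - (card s - 1 - i) = i by omega,
    Nat.cast_sub (by omega : i ≤ card s - 1), Nat.cast_sub (by omega : 1 ≤ card s)] at vieta
  have hsign : ((-1 : ℝ) ^ i) ^ 2 = 1 := by rw [← pow_mul, pow_mul', neg_one_sq, one_pow]
  linear_combination (-(-1 : ℝ) ^ i) * vieta
    + ((card s - i) * s.esymm i - card s * (derivative P).roots.esymm i) * hsign

theorem esymmMean_roots_derivative_prod_X_sub_C (s : Multiset ℝ) {i : ℕ} (hi : i < card s) :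
    (derivative (s.map fun a => X - C a).prod).roots.esymmMean i = s.esymmMean i := by
  obtain ⟨n, hn⟩ : ∃ n, card s = n + 1 := ⟨card s - 1, by omega⟩
  have key := card_mul_esymm_roots_derivative_prod_X_sub_C s hi
  have hchoose := congrArg (Nat.cast : ℕ → ℝ) (Nat.choose_mul_succ_eq n i)
  push_cast [Nat.cast_sub (by omega : i ≤ n + 1)] at hchoose
  rw [hn, Nat.cast_add_one] at key
  unfold esymmMean
  rw [card_roots_derivative_prod_X_sub_C, hn, Nat.add_sub_cancel,
    div_eq_div_iff (by exact_mod_cast (Nat.choose_pos (by omega)).ne')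
      (by exact_mod_cast (Nat.choose_pos (by omega)).ne')]
  refine mul_right_cancel₀ (n.cast_add_one_ne_zero) ?_
  linear_combination ((n + 1).choose i : ℝ) * key - s.esymm i * hchoose

theorem exists_card_eq_esymmMean_eq (s : Multiset ℝ) {m : ℕ} (hm : m ≤ card s) :
    ∃ t : Multiset ℝ, card t = m ∧ ∀ i ≤ m, t.esymmMean i = s.esymmMean i := by
  obtain ⟨d, hd⟩ := Nat.exists_eq_add_of_le hm
  induction d generalizing s with
  | zero => exact ⟨s, hd, fun _ _ => rfl⟩
  | succ d ih =>
    have hcard := card_roots_derivative_prod_X_sub_C s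
    obtain ⟨t, ht, hti⟩ := ih (derivative (s.map fun a => X - C a).prod).roots (by omega)
      (by omega)
    exact ⟨t, ht, fun i hi =>
      (hti i hi).trans (esymmMean_roots_derivative_prod_X_sub_C s (by omega))⟩

theorem esymmMean_eq_zero_of_card_lt {s : Multiset ℝ} {k : ℕ} (h : card s < k) :
    s.esymmMean k = 0 := by
  rw [esymmMean, Nat.choose_eq_zero_of_lt h, Nat.cast_zero, div_zero]

theorem esymmMean_two_le_sq (s : Multiset ℝ) : s.esymmMean 2 ≤ s.esymmMean 1 ^ 2 := by
  rcases lt_or_ge (card s) 2 with h | h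
  · rw [esymmMean_eq_zero_of_card_lt h]
    positivity
  obtain ⟨t, ht, hti⟩ := exists_card_eq_esymmMean_eq s h
  rw [← hti 2 le_rfl, ← hti 1 (by norm_num)]
  obtain ⟨x, y, rfl⟩ := card_eq_two.1 ht
  simp only [esymmMean, insert_eq_cons, esymm_pair_two, card_cons, card_singleton, Nat.reduceAdd,
    Nat.choose_self, Nat.cast_one, div_one, esymm_pair_one, Nat.choose_succ_self_right,
    Nat.cast_ofNat]
  nlinarith [sq_nonneg (x - y)]

theorem esymm_card (s : Multiset ℝ) : s.esymm (card s) = s.prod := by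
  simp [esymm, powersetCard_self]

theorem esymm_map_inv_mul_prod (s : Multiset ℝ) (h0 : (0 : ℝ) ∉ s) {i j : ℕ}
    (hij : i + j = card s) :
    (s.map (·⁻¹)).esymm i * s.prod = s.esymm j := by
  classical
  obtain ⟨ι, _, f, rfl⟩ : ∃ (ι : Type) (_ : Fintype ι) (f : ι → ℝ), s = univ.val.map f :=
    ⟨s, inferInstance, (↑), (map_univ_coe s).symm⟩
  rw [card_map, card_val, card_univ] at hij
  rw [map_map, Finset.esymm_map_val, Finset.esymm_map_val, ← Finset.prod_eq_multiset_prod,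
    Finset.sum_mul]
  refine Finset.sum_nbij' (·ᶜ) (·ᶜ) ?_ ?_ (fun t _ => compl_compl t) (fun t _ => compl_compl t) ?_
  · intro t ht
    simp only [mem_powersetCard_univ, card_compl] at ht ⊢
    omega
  · intro t ht
    simp only [mem_powersetCard_univ, card_compl] at ht ⊢
    omega
  · intro t _
    have hf : ∀ a, f a ≠ 0 := fun a ha => h0 (ha ▸ mem_map_of_mem f (mem_univ a))
    rw [← prod_mul_prod_compl t f, ← mul_assoc, ← prod_mul_distrib]
    simp [hf]

theorem esymmMean_map_inv_mul (s : Multiset ℝ) (h0 : (0 : ℝ) ∉ s) {i j : ℕ}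
    (hij : i + j = card s) :
    (s.map (·⁻¹)).esymmMean i * s.esymmMean (card s) = s.esymmMean j := by
  rw [esymmMean, esymmMean, esymmMean, card_map, Nat.choose_self, Nat.cast_one, div_one,
    esymm_card, div_mul_eq_mul_div, esymm_map_inv_mul_prod s h0 hij, ← hij,
    Nat.choose_symm_add]

theorem esymmMean_mul_le_sq_of_card_eq {s : Multiset ℝ} {j : ℕ} (hs : card s = j + 2) :
    s.esymmMean j * s.esymmMean (j + 2) ≤ s.esymmMean (j + 1) ^ 2 := by
  by_cases h0 : (0 : ℝ) ∈ s
  · have : s.esymmMean (j + 2) = 0 := by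
      rw [← hs, esymmMean, Nat.choose_self, esymm_card, prod_eq_zero h0, zero_div]
    rw [this, mul_zero]
    positivity
  have h1 := esymmMean_map_inv_mul s h0 (i := 1) (j := j + 1) (by omega)
  have h2 := esymmMean_map_inv_mul s h0 (i := 2) (j := j) (by omega)
  rw [hs] at h1 h2
  rw [← h1, ← h2]
  nlinarith [mul_le_mul_of_nonneg_right (esymmMean_two_le_sq (s.map (·⁻¹)))
    (sq_nonneg (s.esymmMean (j + 2)))]

theorem esymmMean_mul_esymmMean_le_sq (s : Multiset ℝ) (j : ℕ) :
    s.esymmMean j * s.esymmMean (j + 2) ≤ s.esymmMean (j + 1) ^ 2 := by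
  rcases lt_or_ge (card s) (j + 2) with h | h
  · rw [esymmMean_eq_zero_of_card_lt h, mul_zero]
    positivity
  obtain ⟨t, ht, hti⟩ := exists_card_eq_esymmMean_eq s h
  rw [← hti j (by omega), ← hti (j + 1) (by omega), ← hti (j + 2) le_rfl]
  exact esymmMean_mul_le_sq_of_card_eq ht

end Multiset

theorem pow_le_pow_succ_of_mul_le_sq {a : ℕ → ℝ} {k : ℕ} (h0 : a 0 = 1)
    (hpos : ∀ i ≤ k, 0 < a i) (hconc : ∀ i, i + 2 ≤ k → a i * a (i + 2) ≤ a (i + 1) ^ 2) :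
    ∀ i, i + 1 ≤ k → a (i + 1) ^ i ≤ a i ^ (i + 1)
  | 0, _ => by simp [h0]
  | i + 1, hi => by
    have ih := pow_le_pow_succ_of_mul_le_sq h0 hpos hconc i (by omega)
    have hpos₀ := hpos i (by omega)
    have hpos₁ := hpos (i + 1) (by omega)
    have hpos₂ := hpos (i + 2) (by omega)
    refine le_of_mul_le_mul_right ?_ (pow_pos hpos₁ i)
    calc a (i + 2) ^ (i + 1) * a (i + 1) ^ i ≤ a (i + 2) ^ (i + 1) * a i ^ (i + 1) := by gcongr
      _ = (a i * a (i + 2)) ^ (i + 1) := by ring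
      _ ≤ (a (i + 1) ^ 2) ^ (i + 1) := by gcongr; exact hconc i (by omega)
      _ = a (i + 1) ^ (i + 2) * a (i + 1) ^ i := by ring

/-- on `Γ_k` with `H_k = 1` one has `σ_{k-1} ≥ C(n,k-1)`. -/
theorem sigma_km1_ge {n k : ℕ} (hk1 : 1 ≤ k) (hk : k ≤ n)
    (lam : Fin n → ℝ) (hlam : lam ∈ GammaK n k)
    (hHk : esymm n k lam = n.choose k) :
    esymm n (k - 1) lam ≥ n.choose (k - 1) := by
  set a := ((univ : Finset (Fin n)).val.map lam).esymmMean
  have ha : ∀ i, a i = esymm n i lam / n.choose i := fun i => by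
    simp only [a, Multiset.esymmMean, Finset.esymm_map_val, Multiset.card_map, card_val,
      card_univ, Fintype.card_fin, esymm]
  have hchoose : ∀ i ≤ n, (0 : ℝ) < n.choose i := fun i hi => by
    exact_mod_cast Nat.choose_pos hi
  have ha0 : a 0 = 1 := by simp [ha, esymm]
  have hpos : ∀ i ≤ k, 0 < a i := fun i hi => by
    rcases Nat.eq_zero_or_pos i with rfl | hi0
    · simp [ha0]
    · exact (ha i).symm ▸ div_pos (hlam i hi0 hi) (hchoose i (by omega))
  have hak : a k = 1 := by rw [ha, hHk, div_self (hchoose k hk).ne']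
  have hmac := pow_le_pow_succ_of_mul_le_sq ha0 hpos
    (fun i _ => Multiset.esymmMean_mul_esymmMean_le_sq _ i) (k - 1) (by omega)
  rw [Nat.sub_add_cancel hk1, hak, one_pow] at hmac
  have := (one_le_pow_iff_of_nonneg (hpos _ (by omega)).le (by omega)).1 hmac
  rwa [ha, one_le_div (hchoose _ (by omega))] at this
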